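/- If the objective in the P₁-subproblem satisfies its stationarity equation SᵀSP₁EEᵀ + ρP₁ = C, then multiplying by SᵀS and (I − SᵀS) splits the solution as P₁ = SᵀS·C'(EEᵀ + ρI)⁻¹ + (I − SᵀS)·C/ρ for appropriate right-hand sides; i.e., the solution restricted to the range and kernel of SᵀS is determined by two decoupled invertible linear systems. -/

import Mathlib

/-!
Write `Q = SᵀS`, an idempotent since `SSᵀ = 1` for a row-selection matrix `S`, and
`A = EEᵀ + ρI`, which is positive definite and hence invertible. Multiplying
`Q P EEᵀ + ρP = C` on the left by `Q` gives `Q P A = Q C`, and by `1 - Q` gives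
`ρ (1 - Q) P = (1 - Q) C`; the two decoupled systems determine `QP` and `(1 - Q)P`,
hence `P`.
-/

open Matrix

namespace Matrix

theorem mul_transpose_eq_one_of_row_indicator {R m n : Type*} [Semiring R] [Fintype n]
    [DecidableEq m] [DecidableEq n] (S : Matrix m n R) {j : m → n} (hj : Function.Injective j)
    (hrow : ∀ k i, S k i = if i = j k then 1 else 0) : S * Sᵀ = 1 := by
  ext k k'
  simp only [mul_apply, transpose_apply, hrow, one_apply, ite_mul, one_mul, zero_mul,
    Finset.sum_ite_eq', Finset.mem_univ, if_true, hj.eq_iff]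

theorem isIdempotentElem_transpose_mul {R m n : Type*} [Semiring R] [Fintype m]
    [Fintype n] [DecidableEq m] {S : Matrix m n R} (h : S * Sᵀ = 1) :
    IsIdempotentElem (Sᵀ * S) := by
  rw [IsIdempotentElem, Matrix.mul_assoc, ← Matrix.mul_assoc S, h, Matrix.one_mul]

theorem isUnit_mul_transpose_add_smul_one {m n : Type*} [Fintype m] [Fintype n]
    [DecidableEq m] (E : Matrix m n ℝ) {ρ : ℝ} (hρ : 0 < ρ) : IsUnit (E * Eᵀ + ρ • 1) := by
  have hE : (E * Eᵀ).PosSemidef :=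
    conjTranspose_eq_transpose_of_trivial E ▸ posSemidef_self_mul_conjTranspose E
  exact (PosDef.posSemidef_add hE (PosDef.one.smul hρ)).isUnit

section Decoupling

variable {K m l : Type*} [Field K] [Fintype m] [Fintype l] [DecidableEq l]
  {Q : Matrix m m K} {M : Matrix l l K} {ρ : K}

theorem idempotent_mul_mul_add_smul_injective (hQ : IsIdempotentElem Q) (hρ : ρ ≠ 0)
    (hA : IsUnit (M + ρ • 1)) :
    Function.Injective fun P : Matrix m l K => Q * P * M + ρ • P := by
  have hA' : IsUnit (M + ρ • 1).det := (isUnit_iff_isUnit_det _).mp hA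
  suffices h : ∀ D : Matrix m l K, Q * D * M + ρ • D = 0 → D = 0 by
    intro P P' hPP'
    refine sub_eq_zero.mp (h _ ?_)
    simp only [Matrix.mul_sub, Matrix.sub_mul, smul_sub]
    rw [sub_add_sub_comm]
    exact sub_eq_zero.mpr hPP'
  intro D hD
  have hQD_A : Q * D * (M + ρ • 1) = 0 := by
    calc Q * D * (M + ρ • 1) = Q * (Q * D * M + ρ • D) := by
          rw [Matrix.mul_add, Matrix.mul_smul, Matrix.mul_one, Matrix.mul_add, Matrix.mul_smul,
            ← Matrix.mul_assoc, ← Matrix.mul_assoc, hQ.eq]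
      _ = 0 := by rw [hD, Matrix.mul_zero]
  have hQD : Q * D = 0 := by
    rw [← mul_nonsing_inv_cancel_right _ (Q * D) hA', hQD_A, Matrix.zero_mul]
  rw [hQD, Matrix.zero_mul, zero_add, smul_eq_zero] at hD
  exact hD.resolve_left hρ

theorem idempotent_mul_mul_add_smul_decoupled_solution [DecidableEq m] (hQ : IsIdempotentElem Q) (hρ : ρ ≠ 0)
    (hA : IsUnit (M + ρ • 1)) (C : Matrix m l K) :
    Q * (Q * C * (M + ρ • 1)⁻¹ + ρ⁻¹ • ((1 - Q) * C)) * M +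
      ρ • (Q * C * (M + ρ • 1)⁻¹ + ρ⁻¹ • ((1 - Q) * C)) = C := by
  have hA' : IsUnit (M + ρ • 1).det := (isUnit_iff_isUnit_det _).mp hA
  have hQ_range : Q * (Q * C * (M + ρ • 1)⁻¹) = Q * C * (M + ρ • 1)⁻¹ := by
    rw [← Matrix.mul_assoc, ← Matrix.mul_assoc, hQ.eq]
  have hQ_kernel : Q * ((1 - Q) * C) = 0 := by
    rw [← Matrix.mul_assoc, Matrix.mul_sub, Matrix.mul_one, hQ.eq, sub_self, Matrix.zero_mul]
  have h_range : Q * C * (M + ρ • 1)⁻¹ * M + ρ • (Q * C * (M + ρ • 1)⁻¹) = Q * C := by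
    calc _ = Q * C * (M + ρ • 1)⁻¹ * (M + ρ • 1) := by
          rw [Matrix.mul_add, Matrix.mul_smul, Matrix.mul_one]
      _ = Q * C := nonsing_inv_mul_cancel_right _ _ hA'
  rw [Matrix.mul_add, Matrix.mul_smul, hQ_range, hQ_kernel, smul_zero, add_zero, smul_add,
    smul_smul, mul_inv_cancel₀ hρ, one_smul, ← add_assoc, h_range, Matrix.sub_mul,
    Matrix.one_mul, add_sub_cancel]

end Decoupling

end Matrix

/-- For a sampling matrix `S` and `ρ > 0`, the stationarity equation
`SᵀS P₁ EEᵀ + ρP₁ = C` of the P₁-subproblem has a unique solution, obtained by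
decoupling along the range and kernel of the projection `SᵀS`:
`P₁ = SᵀS·C(EEᵀ + ρI)⁻¹ + (1/ρ)(I − SᵀS)·C`. -/
theorem stmt17 {m n Ls Ll : ℕ} (S : Matrix (Fin m) (Fin n) ℝ)
    (j : Fin m → Fin n) (hinj : Function.Injective j)
    (hrow : ∀ k i, S k i = if i = j k then 1 else 0)
    (E : Matrix (Fin Ls) (Fin Ll) ℝ) (ρ : ℝ) (hρ : 0 < ρ)
    (C : Matrix (Fin n) (Fin Ls) ℝ) :
    (∃! P : Matrix (Fin n) (Fin Ls) ℝ, Sᵀ * S * P * (E * Eᵀ) + ρ • P = C) ∧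
    Sᵀ * S * (Sᵀ * S * C * (E * Eᵀ + ρ • (1 : Matrix (Fin Ls) (Fin Ls) ℝ))⁻¹ +
            ρ⁻¹ • ((1 - Sᵀ * S) * C)) * (E * Eᵀ) +
        ρ • (Sᵀ * S * C * (E * Eᵀ + ρ • (1 : Matrix (Fin Ls) (Fin Ls) ℝ))⁻¹ +
            ρ⁻¹ • ((1 - Sᵀ * S) * C)) = C := by
  have hQ := isIdempotentElem_transpose_mul (mul_transpose_eq_one_of_row_indicator S hinj hrow)
  have hA := isUnit_mul_transpose_add_smul_one E hρ
  have hsol := idempotent_mul_mul_add_smul_decoupled_solution hQ hρ.ne' hA C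
  refine ⟨⟨_, hsol, fun P hP => ?_⟩, hsol⟩
  exact idempotent_mul_mul_add_smul_injective hQ hρ.ne' hA (hP.trans hsol.symm)
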